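/- Let γ: [0,T)×[-1,1] → ℝⁿ be a fixed-length free-boundary elastic flow (FLFB-EF). Then for all t ∈ [0,T) and x ∈ {−1,1}: (∂_s^⊥)³κ(t,x) + τ₀(x) S_{γ(t,x)} (∂_s^⊥)²κ(t,x) + ⟨κ(t,x), ∂_s^⊥κ(t,x)⟩ κ(t,x) = 0. -/

import Mathlib

open Set MeasureTheory Filter
open scoped RealInnerProductSpace

noncomputable section

variable {n : ℕ}

/-- Arc-length derivative along the curve `g` of a field `f`. -/
def aderiv {F : Type*} [NormedAddCommGroup F] [NormedSpace ℝ F]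
    (g : ℝ → EuclideanSpace ℝ (Fin n)) (f : ℝ → F) : ℝ → F :=
  fun x => ‖deriv g x‖⁻¹ • deriv f x

/-- Unit tangent `∂ₛγ`. -/
def utang (g : ℝ → EuclideanSpace ℝ (Fin n)) : ℝ → EuclideanSpace ℝ (Fin n) :=
  aderiv g g

/-- Normal projection along `g`. -/
def nperp (g f : ℝ → EuclideanSpace ℝ (Fin n)) : ℝ → EuclideanSpace ℝ (Fin n) :=
  fun x => f x - ⟪f x, utang g x⟫ • utang g x

/-- Curvature vector `κ = ∂ₛ²γ`. -/
def curvV (g : ℝ → EuclideanSpace ℝ (Fin n)) : ℝ → EuclideanSpace ℝ (Fin n) :=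
  aderiv g (utang g)

/-- Projected arc-length derivative `∂ₛ^⊥`. -/
def aderivP (g f : ℝ → EuclideanSpace ℝ (Fin n)) : ℝ → EuclideanSpace ℝ (Fin n) :=
  nperp g (aderiv g f)

/-- Iterated projected arc-length derivative `(∂ₛ^⊥)^k`. -/
def aderivPIter (g : ℝ → EuclideanSpace ℝ (Fin n)) :
    ℕ → (ℝ → EuclideanSpace ℝ (Fin n)) → ℝ → EuclideanSpace ℝ (Fin n)
  | 0, f => f
  | k + 1, f => aderivP g (aderivPIter g k f)

/-- Iterated full arc-length derivative `∂ₛ^k`. -/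
def aderivIter (g : ℝ → EuclideanSpace ℝ (Fin n)) :
    ℕ → (ℝ → EuclideanSpace ℝ (Fin n)) → ℝ → EuclideanSpace ℝ (Fin n)
  | 0, f => f
  | k + 1, f => aderiv g (aderivIter g k f)

/-- Elastic energy `E(γ) = ∫ |κ|² ds`. -/
def elE (g : ℝ → EuclideanSpace ℝ (Fin n)) : ℝ :=
  ∫ x in (-1:ℝ)..1, ‖curvV g x‖ ^ 2 * ‖deriv g x‖

/-- Length `L(γ) = ∫ ds`. -/
def elL (g : ℝ → EuclideanSpace ℝ (Fin n)) : ℝ :=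
  ∫ x in (-1:ℝ)..1, ‖deriv g x‖

/-- Energy gradient `∇E(γ) = 2(∂ₛ^⊥)²κ + |κ|²κ`. -/
def gradElE (g : ℝ → EuclideanSpace ℝ (Fin n)) : ℝ → EuclideanSpace ℝ (Fin n) :=
  fun x => (2:ℝ) • aderivPIter g 2 (curvV g) x + ‖curvV g x‖ ^ 2 • curvV g x

/-- Lagrange multiplier `λ(γ)`. -/
def lagMul (g : ℝ → EuclideanSpace ℝ (Fin n)) : ℝ :=
  (∫ x in (-1:ℝ)..1, ⟪gradElE g x, curvV g x⟫ * ‖deriv g x‖) / elE g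

/-- Time derivative `∂ₜγ` of a family. -/
def timeD (γ : ℝ → ℝ → EuclideanSpace ℝ (Fin n)) : ℝ → ℝ → EuclideanSpace ℝ (Fin n) :=
  fun t x => deriv (fun s => γ s x) t

/-- Tangential speed `φ = ⟨∂ₜγ, ∂ₛγ⟩`. -/
def tanSpeed (γ : ℝ → ℝ → EuclideanSpace ℝ (Fin n)) : ℝ → ℝ → ℝ :=
  fun t x => ⟪timeD γ t x, utang (γ t) x⟫

/-- Normal velocity `V = ∂ₜγ − φ ∂ₛγ`. -/
def normalVel (γ : ℝ → ℝ → EuclideanSpace ℝ (Fin n)) : ℝ → ℝ → EuclideanSpace ℝ (Fin n) :=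
  fun t x => timeD γ t x - tanSpeed γ t x • utang (γ t) x

/-- Normal time derivative `∂ₜ^⊥N` of a field along the family γ. -/
def timeDPerp (γ N : ℝ → ℝ → EuclideanSpace ℝ (Fin n)) : ℝ → ℝ → EuclideanSpace ℝ (Fin n) :=
  fun t x => deriv (fun s => N s x) t
    - ⟪deriv (fun s => N s x) t, utang (γ t) x⟫ • utang (γ t) x

/-- Shape operator `S_p = −Dξ(p)`. -/
def shapeOp (ξ : EuclideanSpace ℝ (Fin n) → EuclideanSpace ℝ (Fin n))
    (p v : EuclideanSpace ℝ (Fin n)) : EuclideanSpace ℝ (Fin n) :=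
  -(fderiv ℝ ξ p v)

/-- `L²(ds)` norm of a field along `g`. -/
def l2ds (g f : ℝ → EuclideanSpace ℝ (Fin n)) : ℝ :=
  Real.sqrt (∫ x in (-1:ℝ)..1, ‖f x‖ ^ 2 * ‖deriv g x‖)

/-- Fixed-length free-boundary elastic flow on `[0,T)`. -/
def IsFLFBEF (T : ℝ) (ξ : EuclideanSpace ℝ (Fin n) → EuclideanSpace ℝ (Fin n))
    (τ : ℝ → ℝ) (γ : ℝ → ℝ → EuclideanSpace ℝ (Fin n)) : Prop :=
  ContDiff ℝ (⊤ : ℕ∞) (fun p : ℝ × ℝ => γ p.1 p.2) ∧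
  (∀ t ∈ Ico (0:ℝ) T, ∀ x ∈ Icc (-1:ℝ) 1, deriv (γ t) x ≠ 0) ∧
  (∀ t ∈ Ico (0:ℝ) T, 0 < elE (γ t)) ∧
  (∀ t ∈ Ico (0:ℝ) T, ∀ x ∈ Icc (-1:ℝ) 1,
    timeD γ t x = -(gradElE (γ t) x - lagMul (γ t) • curvV (γ t) x)) ∧
  (∀ t ∈ Ico (0:ℝ) T, ∀ x ∈ ({-1, 1} : Set ℝ),
    ⟪timeD γ t x, utang (γ t) x⟫ = 0 ∧
    utang (γ t) x = τ x • ξ (γ t x) ∧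
    ‖ξ (γ t x)‖ = 1 ∧
    aderivP (γ t) (curvV (γ t)) x = -(τ x • shapeOp ξ (γ t x) (curvV (γ t) x)))

/-!
Differentiate the boundary condition `∂ₛγ = τ ξ(γ)` in time. Since mixed partial derivatives
commute, `∂ₜ(∂ₛγ) = ∂ₛ^⊥(∂ₜγ)`, so at the boundary `∂ₛ^⊥V = τ Dξ(V)` for the velocity
`V = -(2 (∂ₛ^⊥)²κ + |κ|²κ - λκ)`. As the flow equation holds up to the endpoints, `∂ₛ^⊥V` can
also be computed from it: using `κ ⊥ ∂ₛγ` it equals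
`-2 (∂ₛ^⊥)³κ - 2⟨∂ₛ^⊥κ, κ⟩κ - |κ|² ∂ₛ^⊥κ + λ ∂ₛ^⊥κ`. Substituting the first-order condition
`∂ₛ^⊥κ = τ Dξ(κ)` cancels the `|κ|²` and `λ` terms and leaves the identity.

Both derivatives are one-sided where `t = 0` or `x = ±1`; they are identified by uniqueness of
derivatives within `Ico 0 T` and `Icc (-1) 1`.
-/

open scoped ContDiff

section Normalize

variable {E : Type*} [NormedAddCommGroup E] [InnerProductSpace ℝ E] {f : ℝ → E} {f' : E} {t : ℝ}

theorem HasDerivAt.norm (hf : HasDerivAt f f' t) (h0 : f t ≠ 0) :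
    HasDerivAt (fun s => ‖f s‖) (⟪f t, f'⟫ / ‖f t‖) t := by
  have h := hf.norm_sq.sqrt (by positivity)
  simp only [Real.sqrt_sq (norm_nonneg _)] at h
  convert h using 1
  field_simp

theorem HasDerivAt.inv_norm_smul (hf : HasDerivAt f f' t) (h0 : f t ≠ 0) :
    HasDerivAt (fun s => ‖f s‖⁻¹ • f s)
      (‖f t‖⁻¹ • (f' - ⟪f', ‖f t‖⁻¹ • f t⟫ • (‖f t‖⁻¹ • f t))) t := by
  have hr : ‖f t‖ ≠ 0 := norm_ne_zero_iff.mpr h0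
  convert ((hf.norm h0).inv hr).smul hf using 1
  · rfl
  rw [real_inner_smul_right, real_inner_comm, Pi.inv_apply]
  match_scalars <;> field_simp

end Normalize

theorem contDiffAt_deriv {F : Type*} [NormedAddCommGroup F] [NormedSpace ℝ F] {f : ℝ → F}
    {x : ℝ} (hf : ContDiffAt ℝ ∞ f x) : ContDiffAt ℝ ∞ (deriv f) x :=
  (hf.fderiv_right le_rfl).clm_apply contDiffAt_const

section Curve

variable {g : ℝ → EuclideanSpace ℝ (Fin n)} {x : ℝ}

theorem aderivP_apply (f : ℝ → EuclideanSpace ℝ (Fin n)) :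
    aderivP g f x = ‖deriv g x‖⁻¹ • deriv f x
      - ⟪‖deriv g x‖⁻¹ • deriv f x, utang g x⟫ • utang g x := rfl

theorem norm_utang (hx : deriv g x ≠ 0) : ‖utang g x‖ = 1 := by
  simp only [utang, aderiv, norm_smul, norm_inv, norm_norm]
  exact inv_mul_cancel₀ (norm_ne_zero_iff.mpr hx)

section Smooth

variable (hg : ContDiff ℝ ∞ g) (hx : deriv g x ≠ 0)
include hg hx

theorem contDiffAt_aderiv {F : Type*} [NormedAddCommGroup F] [NormedSpace ℝ F] {f : ℝ → F}
    (hf : ContDiffAt ℝ ∞ f x) : ContDiffAt ℝ ∞ (aderiv g f) x :=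
  (((contDiffAt_deriv hg.contDiffAt).norm ℝ hx).inv (norm_ne_zero_iff.mpr hx)).smul
    (contDiffAt_deriv hf)

theorem contDiffAt_utang : ContDiffAt ℝ ∞ (utang g) x :=
  contDiffAt_aderiv hg hx hg.contDiffAt

theorem contDiffAt_aderivP {f : ℝ → EuclideanSpace ℝ (Fin n)} (hf : ContDiffAt ℝ ∞ f x) :
    ContDiffAt ℝ ∞ (aderivP g f) x := by
  have hu := contDiffAt_utang hg hx
  have hf' := contDiffAt_aderiv hg hx hf
  exact hf'.sub ((hf'.inner ℝ hu).smul hu)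

theorem contDiffAt_aderivPIter_curvV (k : ℕ) :
    ContDiffAt ℝ ∞ (aderivPIter g k (curvV g)) x := by
  induction k with
  | zero => exact contDiffAt_aderiv hg hx (contDiffAt_utang hg hx)
  | succ k ih => exact contDiffAt_aderivP hg hx ih

theorem inner_curvV_utang : ⟪curvV g x, utang g x⟫ = 0 := by
  have hu := ((contDiffAt_utang hg hx).differentiableAt (by simp)).hasDerivAt
  have hnear : ∀ᶠ y in nhds x, deriv g y ≠ 0 :=
    (contDiffAt_deriv hg.contDiffAt).continuousAt.eventually_ne hx
  have hunit : HasDerivAt (fun y => ‖utang g y‖ ^ 2) 0 x :=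
    (hasDerivAt_const x (1 : ℝ)).congr_of_eventuallyEq
      (hnear.mono fun y hy => by simp [norm_utang hy])
  have h := hu.norm_sq.unique hunit
  rw [curvV, aderiv, real_inner_comm, real_inner_smul_right]
  simp [show ⟪utang g x, deriv (utang g) x⟫ = 0 by linarith]

theorem aderivP_eq_of_eqOn_neg_gradElE_sub {c : ℝ} {f : ℝ → EuclideanSpace ℝ (Fin n)}
    {s : Set ℝ} (hs : UniqueDiffWithinAt ℝ s x) (hxs : x ∈ s) (hf : DifferentiableAt ℝ f x)
    (hfs : EqOn f (fun y => -(gradElE g y - c • curvV g y)) s) :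
    aderivP g f x
      = -((2:ℝ) • aderivPIter g 3 (curvV g) x)
        - (2 * ⟪aderivP g (curvV g) x, curvV g x⟫) • curvV g x
        - ‖curvV g x‖ ^ 2 • aderivP g (curvV g) x + c • aderivP g (curvV g) x := by
  have hκ : HasDerivAt (curvV g) (deriv (curvV g) x) x :=
    ((contDiffAt_aderivPIter_curvV hg hx 0).differentiableAt (by simp)).hasDerivAt
  have hk₂ : HasDerivAt (aderivPIter g 2 (curvV g)) (deriv (aderivPIter g 2 (curvV g)) x) x :=
    ((contDiffAt_aderivPIter_curvV hg hx 2).differentiableAt (by simp)).hasDerivAt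
  have hV : HasDerivAt (fun y => -(gradElE g y - c • curvV g y)) _ x :=
    (((hk₂.const_smul (2:ℝ)).add (hκ.norm_sq.smul hκ)).sub (hκ.const_smul c)).neg
  have hf' := hs.eq_deriv s hf.hasDerivAt.hasDerivWithinAt
    (hV.hasDerivWithinAt.congr_of_mem (fun y hy => hfs hy) hxs)
  have hκu := inner_curvV_utang hg hx
  rw [show aderivPIter g 3 (curvV g) x = aderivP g (aderivPIter g 2 (curvV g)) x from rfl]
  simp only [aderivP_apply, hf']
  simp only [inner_add_left, inner_sub_left, inner_neg_left, real_inner_smul_left,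
    inner_sub_right, real_inner_smul_right, hκu, real_inner_comm (curvV g x)]
  module

end Smooth

end Curve

section Family

variable {F : Type*} [NormedAddCommGroup F] [NormedSpace ℝ F] {t x : ℝ}

theorem DifferentiableAt.hasDerivAt_slice_snd {G : ℝ × ℝ → F}
    (hG : DifferentiableAt ℝ G (t, x)) :
    HasDerivAt (fun y => G (t, y)) (fderiv ℝ G (t, x) (0, 1)) x :=
  hG.hasFDerivAt.comp_hasDerivAt (f := fun y : ℝ => (t, y)) x
    ((hasDerivAt_const x t).prodMk (hasDerivAt_id x))

theorem DifferentiableAt.hasDerivAt_slice_fst {G : ℝ × ℝ → F}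
    (hG : DifferentiableAt ℝ G (t, x)) :
    HasDerivAt (fun s => G (s, x)) (fderiv ℝ G (t, x) (1, 0)) t :=
  hG.hasFDerivAt.comp_hasDerivAt (f := fun s : ℝ => (s, x)) t
    ((hasDerivAt_id t).prodMk (hasDerivAt_const t x))

theorem hasDerivAt_deriv_comm {γ : ℝ → ℝ → F}
    (hγ : ContDiff ℝ 2 (fun p : ℝ × ℝ => γ p.1 p.2)) (t x : ℝ) :
    HasDerivAt (fun s => deriv (γ s) x) (deriv (fun y => deriv (fun s => γ s y) t) x) t := by
  set G : ℝ × ℝ → F := fun p => γ p.1 p.2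
  have hG : Differentiable ℝ G := hγ.differentiable two_ne_zero
  have hG' : Differentiable ℝ (fderiv ℝ G) :=
    (hγ.fderiv_right (m := 1) le_rfl).differentiable one_ne_zero
  have hsnd : ∀ s y, deriv (γ s) y = fderiv ℝ G (s, y) (0, 1) := fun s y =>
    (hG (s, y)).hasDerivAt_slice_snd.deriv
  have hfst : ∀ s y, deriv (fun s => γ s y) s = fderiv ℝ G (s, y) (1, 0) := fun s y =>
    (hG (s, y)).hasDerivAt_slice_fst.deriv
  have hsymm := hγ.contDiffAt.isSymmSndFDerivAt (x := (t, x)) (by simp) (1, 0) (0, 1)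
  have hT := (hG' (t, x)).hasDerivAt_slice_fst.clm_apply (hasDerivAt_const t ((0:ℝ), (1:ℝ)))
  have hX := (hG' (t, x)).hasDerivAt_slice_snd.clm_apply (hasDerivAt_const x ((1:ℝ), (0:ℝ)))
  simp only [map_zero, add_zero] at hT hX
  simp only [hsnd, hfst]
  rw [hX.deriv, ← hsymm]
  exact hT

end Family

section FlowBoundary

variable {γ : ℝ → ℝ → EuclideanSpace ℝ (Fin n)} {t x : ℝ}

theorem differentiable_timeD (hγ : ContDiff ℝ 2 (fun p : ℝ × ℝ => γ p.1 p.2)) (t : ℝ) :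
    Differentiable ℝ (timeD γ t) := by
  have hG := hγ.differentiable two_ne_zero
  have hG' := (hγ.fderiv_right (m := 1) le_rfl).differentiable one_ne_zero
  have h : timeD γ t = fun y => fderiv ℝ (fun p : ℝ × ℝ => γ p.1 p.2) (t, y) (1, 0) :=
    funext fun y => (hG (t, y)).hasDerivAt_slice_fst.deriv
  rw [h]
  exact fun y => (hG' (t, y)).hasDerivAt_slice_snd.differentiableAt.clm_apply
    (differentiableAt_const _)

theorem hasDerivAt_utang_time (hγ : ContDiff ℝ 2 (fun p : ℝ × ℝ => γ p.1 p.2))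
    (hx : deriv (γ t) x ≠ 0) :
    HasDerivAt (fun s => utang (γ s) x) (aderivP (γ t) (timeD γ t) x) t := by
  have h := (hasDerivAt_deriv_comm hγ t x).inv_norm_smul hx
  rw [smul_sub, ← mul_smul, ← real_inner_smul_left] at h
  exact h

theorem aderivP_timeD_eq_of_utang_eq
    {ξ : EuclideanSpace ℝ (Fin n) → EuclideanSpace ℝ (Fin n)} {c : ℝ} {s : Set ℝ}
    (hγ : ContDiff ℝ 2 (fun p : ℝ × ℝ => γ p.1 p.2)) (hξ : DifferentiableAt ℝ ξ (γ t x))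
    (hs : UniqueDiffWithinAt ℝ s t) (hts : t ∈ s) (hx : deriv (γ t) x ≠ 0)
    (hbc : ∀ r ∈ s, utang (γ r) x = c • ξ (γ r x)) :
    aderivP (γ t) (timeD γ t) x = c • fderiv ℝ ξ (γ t x) (timeD γ t x) := by
  have hγx : HasDerivAt (fun r => γ r x) (timeD γ t x) t :=
    ((hγ.differentiable two_ne_zero) (t, x)).hasDerivAt_slice_fst.differentiableAt.hasDerivAt
  have hξγ := (hξ.hasFDerivAt.comp_hasDerivAt t hγx).const_smul c
  exact hs.eq_deriv s (hasDerivAt_utang_time hγ hx).hasDerivWithinAt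
    (hξγ.hasDerivWithinAt.congr_of_mem hbc hts)

end FlowBoundary

theorem statement6_general
    (n : ℕ) (T : ℝ)
    (ξ : EuclideanSpace ℝ (Fin n) → EuclideanSpace ℝ (Fin n))
    (hξ : ContDiff ℝ (⊤ : ℕ∞) ξ)
    (τ : ℝ → ℝ)
    (γ : ℝ → ℝ → EuclideanSpace ℝ (Fin n))
    (hflow : IsFLFBEF T ξ τ γ) :
    ∀ t ∈ Ico (0:ℝ) T, ∀ x ∈ ({-1, 1} : Set ℝ),
      aderivPIter (γ t) 3 (curvV (γ t)) x
        + τ x • shapeOp ξ (γ t x) (aderivPIter (γ t) 2 (curvV (γ t)) x)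
        + ⟪curvV (γ t) x, aderivP (γ t) (curvV (γ t)) x⟫ • curvV (γ t) x = 0 := by
  intro t ht x hx
  obtain ⟨hγ, hreg, -, hvel, hbdry⟩ := hflow
  have hxI : x ∈ Icc (-1:ℝ) 1 := by rcases hx with rfl | rfl <;> norm_num
  have hγ₂ : ContDiff ℝ 2 (fun p : ℝ × ℝ => γ p.1 p.2) := contDiff_infty.mp hγ 2
  have hg : ContDiff ℝ ∞ (γ t) := hγ.comp (contDiff_const.prodMk contDiff_id)
  have hx₀ := hreg t ht x hxI
  have hTime := aderivP_timeD_eq_of_utang_eq hγ₂ (hξ.differentiable (by simp) _)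
    (uniqueDiffOn_Ico 0 T t ht) ht hx₀ fun s hs => (hbdry s hs x hx).2.1
  have hSpace := aderivP_eq_of_eqOn_neg_gradElE_sub hg hx₀ (f := timeD γ t)
    (uniqueDiffOn_Icc (by norm_num) x hxI) hxI (differentiable_timeD hγ₂ t x)
    fun y hy => hvel t ht y hy
  have hκ : aderivP (γ t) (curvV (γ t)) x = τ x • fderiv ℝ ξ (γ t x) (curvV (γ t) x) := by
    simpa [shapeOp] using (hbdry t ht x hx).2.2.2
  rw [hSpace, hvel t ht x hxI, gradElE] at hTime
  simp only [shapeOp, map_neg, map_sub, map_add, map_smul] at hTime ⊢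
  rw [real_inner_comm] at hTime
  linear_combination (norm := module) (-1/2 : ℝ) • hTime
    + ((lagMul (γ t) - ‖curvV (γ t) x‖ ^ 2) / 2) • hκ

/-- third-order boundary identity along a FLFB-EF (Lemma 2.8). -/
theorem statement6
    (n : ℕ) (hn : 2 ≤ n) (T : ℝ) (hT : 0 < T)
    (ξ : EuclideanSpace ℝ (Fin n) → EuclideanSpace ℝ (Fin n))
    (hξ : ContDiff ℝ (⊤ : ℕ∞) ξ)
    (hsym : ∀ p v w : EuclideanSpace ℝ (Fin n),
      ⟪fderiv ℝ ξ p v, w⟫ = ⟪v, fderiv ℝ ξ p w⟫)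
    (hbd : ∀ k : ℕ, ∃ Ck : ℝ, ∀ p, ‖iteratedFDeriv ℝ k ξ p‖ ≤ Ck)
    (τ : ℝ → ℝ) (hτ : ∀ x ∈ ({-1, 1} : Set ℝ), τ x = 1 ∨ τ x = -1)
    (γ : ℝ → ℝ → EuclideanSpace ℝ (Fin n))
    (hflow : IsFLFBEF T ξ τ γ) :
    ∀ t ∈ Ico (0:ℝ) T, ∀ x ∈ ({-1, 1} : Set ℝ),
      aderivPIter (γ t) 3 (curvV (γ t)) x
        + τ x • shapeOp ξ (γ t x) (aderivPIter (γ t) 2 (curvV (γ t)) x)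
        + ⟪curvV (γ t) x, aderivP (γ t) (curvV (γ t)) x⟫ • curvV (γ t) x = 0 :=
  statement6_general n T ξ hξ τ γ hflow
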